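/- Canonical model existence lemma for knowledge: if K_C φ ∉ hd(w) for a state w of the canonical model, then there exists a state u with w ∼_C u and φ ∉ hd(u); concretely, the set X = {¬φ} ∪ {ψ : K_C ψ ∈ hd(w)} is consistent, so w can be extended by an edge labelled C to a maximal consistent extension of X. -/

import Mathlib

/-- Formulas of the logic of clandestine operations: propositional variables,
falsum, negation, implication, distributed knowledge `know C φ` and
clandestine power `how C φ` for coalitions `C ⊆ Ag`. -/
inductive Formula (α : Type) (Ag : Type) : Type
  | var  : α → Formula α Ag
  | bot  : Formula α Ag
  | neg  : Formula α Ag → Formula α Ag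
  | imp  : Formula α Ag → Formula α Ag → Formula α Ag
  | know : Set Ag → Formula α Ag → Formula α Ag
  | how  : Set Ag → Formula α Ag → Formula α Ag

namespace Formula

/-- Defined disjunction. -/
def or {α Ag : Type} (φ ψ : Formula α Ag) : Formula α Ag := imp (neg φ) ψ

/-- Defined verum. -/
def top {α Ag : Type} : Formula α Ag := neg bot

/-- Boolean evaluation treating variables and modal formulas as atoms. -/
def eval {α Ag : Type} (v : Formula α Ag → Bool) : Formula α Ag → Bool
  | var p => v (var p)
  | bot => false
  | neg φ => !(eval v φ)
  | imp φ ψ => !(eval v φ) || eval v ψ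
  | know C φ => v (know C φ)
  | how C φ => v (how C φ)

end Formula

/-- A propositional tautology: true under every Boolean valuation of its
atoms (variables and modal subformulas). -/
def Tautology {α Ag : Type} (φ : Formula α Ag) : Prop :=
  ∀ v, φ.eval v = true

/-- Theorems of the logic of clandestine operations. -/
inductive Prov {α Ag : Type} : Formula α Ag → Prop
  | taut {φ} : Tautology φ → Prov φ
  | truth (C : Set Ag) (φ) : Prov (.imp (.know C φ) φ)
  | negIntro (C : Set Ag) (φ) :
      Prov (.imp (.neg (.know C φ)) (.know C (.neg (.know C φ))))
  | distrib (C : Set Ag) (φ ψ) :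
      Prov (.imp (.know C (.imp φ ψ)) (.imp (.know C φ) (.know C ψ)))
  | mono {C' C : Set Ag} (φ) : C' ⊆ C → Prov (.imp (.know C' φ) (.know C φ))
  | stratIntro (C : Set Ag) (φ) : Prov (.imp (.how C φ) (.know C (.how C φ)))
  | cia {C I A : Set Ag} (φ ψ) : C ∩ (I ∪ A) = ∅ →
      Prov (.imp
        (.know (C ∪ I) (.know (A ∪ I) (.imp (.know C φ) (.know (C ∪ I) ψ))))
        (.imp (.how C φ) (.how (C ∪ I) ψ)))
  | nonterm (C : Set Ag) : Prov (.neg (.how C .bot))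
  | emptyCoal (φ : Formula α Ag) : Prov (.neg (.how ∅ φ))
  | mp {φ ψ} : Prov (.imp φ ψ) → Prov φ → Prov ψ
  | necK (C : Set Ag) {φ} : Prov φ → Prov (.know C φ)
  | necH {C : Set Ag} {φ} : C ≠ ∅ → Prov φ → Prov (.how C φ)

/-- Derivability from a set of hypotheses `X`: from theorems of the system
and members of `X` using Modus Ponens only. -/
inductive ProvFrom {α Ag : Type} (X : Set (Formula α Ag)) : Formula α Ag → Prop
  | hyp {φ} : φ ∈ X → ProvFrom X φ
  | thm {φ} : Prov φ → ProvFrom X φ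
  | mp {φ ψ} : ProvFrom X (.imp φ ψ) → ProvFrom X φ → ProvFrom X ψ

/-- A set of formulas is consistent if falsum is not derivable from it. -/
def Consistent {α Ag : Type} (X : Set (Formula α Ag)) : Prop :=
  ¬ ProvFrom X .bot

/-- Maximal consistent set of formulas. -/
def MCS {α Ag : Type} (X : Set (Formula α Ag)) : Prop :=
  Consistent X ∧ ∀ φ : Formula α Ag, φ ∈ X ∨ .neg φ ∈ X

/-- Canonical states are lists of (coalition, maximal consistent set) steps,
most recent step first, rooted at the fixed maximal consistent set `X₀`.
`hd X₀ w` is the maximal consistent set labelling the node `w`. -/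
def hd {α Ag : Type} (X₀ : Set (Formula α Ag)) :
    List (Set Ag × Set (Formula α Ag)) → Set (Formula α Ag)
  | [] => X₀
  | (_, X) :: _ => X

/-- The canonical-state condition: every set along the path is maximal
consistent and contains everything known (to the edge coalition) at its
parent. -/
def IsCanState {α Ag : Type} (X₀ : Set (Formula α Ag)) :
    List (Set Ag × Set (Formula α Ag)) → Prop
  | [] => True
  | (C, X) :: w => IsCanState X₀ w ∧ MCS X ∧
      {φ : Formula α Ag | Formula.know C φ ∈ hd X₀ w} ⊆ X

/-- Canonical indistinguishability for agent `a`: all edges on the simple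
tree path between `w` and `w'` (through a common ancestor `v`) are labelled
with a coalition containing `a`. -/
def CSim {α Ag : Type} (a : Ag)
    (w w' : List (Set Ag × Set (Formula α Ag))) : Prop :=
  ∃ v, v <:+ w ∧ v <:+ w' ∧
    (∀ p ∈ w.take (w.length - v.length), a ∈ p.1) ∧
    (∀ p ∈ w'.take (w'.length - v.length), a ∈ p.1)

/-- Canonical coalition indistinguishability. -/
def CSimC {α Ag : Type} (C : Set Ag)
    (w w' : List (Set Ag × Set (Formula α Ag))) : Prop :=
  ∀ a ∈ C, CSim a w w'

/-- The canonical mechanism: `(w, C, φ, u) ∈ M` iff `w ∼_{𝒜∖C} u` and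
`H_C φ ∈ hd w` implies `K_C φ ∈ hd u`. -/
def CanM {α Ag : Type} (X₀ : Set (Formula α Ag))
    (w : List (Set Ag × Set (Formula α Ag))) (C : Set Ag) (φ : Formula α Ag)
    (u : List (Set Ag × Set (Formula α Ag))) : Prop :=
  CSimC Cᶜ w u ∧ (Formula.how C φ ∈ hd X₀ w → Formula.know C φ ∈ hd X₀ u)

/-!
Every derivation from `X` can be replayed under `K_C`: hypotheses become members of `K_C X`,
theorems stay theorems by necessitation, and Modus Ponens is the distribution axiom. Hence if
`{ψ | K_C ψ ∈ hd w}` together with `¬φ` were inconsistent, it would derive `φ`, so `hd w` would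
derive `K_C φ` and, being maximal consistent, contain it. Lindenbaum's lemma then extends the
consistent set to a maximal consistent `Y`, and the one-edge extension `(C, Y) :: w` is the
required canonical state.
-/

section CanonicalModel

variable {α Ag : Type}

namespace Prov

lemma imp_self (φ : Formula α Ag) : Prov (.imp φ φ) :=
  Prov.taut fun v => by cases hφ : φ.eval v <;> simp [Formula.eval, hφ]

lemma imp_imp_self (φ ψ : Formula α Ag) : Prov (.imp φ (.imp ψ φ)) :=
  Prov.taut fun v => by
    cases hφ : φ.eval v <;> cases hψ : ψ.eval v <;> simp [Formula.eval, hφ, hψ]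

lemma imp_imp_distrib (χ ψ φ : Formula α Ag) :
    Prov (.imp (.imp χ (.imp ψ φ)) (.imp (.imp χ ψ) (.imp χ φ))) :=
  Prov.taut fun v => by
    cases hχ : χ.eval v <;> cases hψ : ψ.eval v <;> cases hφ : φ.eval v <;>
      simp [Formula.eval, hχ, hψ, hφ]

lemma of_neg_imp_bot (φ : Formula α Ag) : Prov (.imp (.imp (.neg φ) .bot) φ) :=
  Prov.taut fun v => by cases hφ : φ.eval v <;> simp [Formula.eval, hφ]

lemma imp_neg_imp_bot (φ : Formula α Ag) : Prov (.imp φ (.imp (.neg φ) .bot)) :=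
  Prov.taut fun v => by cases hφ : φ.eval v <;> simp [Formula.eval, hφ]

lemma bot_of_imp_bot_of_neg_imp_bot (φ : Formula α Ag) :
    Prov (.imp (.imp φ .bot) (.imp (.imp (.neg φ) .bot) .bot)) :=
  Prov.taut fun v => by cases hφ : φ.eval v <;> simp [Formula.eval, hφ]

end Prov

namespace ProvFrom

variable {X Y : Set (Formula α Ag)} {φ : Formula α Ag}

lemma mono (hXY : X ⊆ Y) (h : ProvFrom X φ) : ProvFrom Y φ := by
  induction h with
  | hyp hm => exact hyp (hXY hm)
  | thm ht => exact thm ht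
  | mp _ _ ih₁ ih₂ => exact mp ih₁ ih₂

lemma deduction {χ : Formula α Ag} (h : ProvFrom (insert χ X) φ) :
    ProvFrom X (.imp χ φ) := by
  induction h with
  | hyp hm =>
    rcases hm with rfl | hm
    · exact thm (Prov.imp_self _)
    · exact mp (thm (Prov.imp_imp_self _ _)) (hyp hm)
  | thm ht => exact mp (thm (Prov.imp_imp_self _ _)) (thm ht)
  | mp _ _ ih₁ ih₂ => exact mp (mp (thm (Prov.imp_imp_distrib _ _ _)) ih₁) ih₂

lemma know_image (C : Set Ag) (h : ProvFrom X φ) :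
    ProvFrom (Formula.know C '' X) (.know C φ) := by
  induction h with
  | hyp hm => exact hyp (Set.mem_image_of_mem _ hm)
  | thm ht => exact thm (Prov.necK C ht)
  | mp _ _ ih₁ ih₂ => exact mp (mp (thm (Prov.distrib C _ _)) ih₁) ih₂

lemma exists_mem_of_sUnion {c : Set (Set (Formula α Ag))}
    (hc : IsChain (· ⊆ ·) c) (hne : c.Nonempty) (h : ProvFrom (⋃₀ c) φ) :
    ∃ Z ∈ c, ProvFrom Z φ := by
  induction h with
  | hyp hm =>
    obtain ⟨Z, hZ, hmZ⟩ := hm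
    exact ⟨Z, hZ, hyp hmZ⟩
  | thm ht => exact ⟨hne.some, hne.some_mem, thm ht⟩
  | mp _ _ ih₁ ih₂ =>
    obtain ⟨Z₁, hZ₁, h₁⟩ := ih₁
    obtain ⟨Z₂, hZ₂, h₂⟩ := ih₂
    obtain ⟨Z, hZ, hZ₁Z, hZ₂Z⟩ := hc.directedOn Z₁ hZ₁ Z₂ hZ₂
    exact ⟨Z, hZ, mp (h₁.mono hZ₁Z) (h₂.mono hZ₂Z)⟩

end ProvFrom

lemma MCS.mem_of_provFrom {X : Set (Formula α Ag)} (hX : MCS X) {φ : Formula α Ag}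
    (h : ProvFrom X φ) : φ ∈ X :=
  (hX.2 φ).resolve_right fun hn =>
    hX.1 (.mp (.mp (.thm (Prov.imp_neg_imp_bot φ)) h) (.hyp hn))

lemma MCS.not_mem_of_neg_mem {X : Set (Formula α Ag)} (hX : MCS X)
    {φ : Formula α Ag} (hn : Formula.neg φ ∈ X) : φ ∉ X := fun hm =>
  hX.1 (.mp (.mp (.thm (Prov.imp_neg_imp_bot φ)) (.hyp hm)) (.hyp hn))

lemma Consistent.exists_mcs_superset {X : Set (Formula α Ag)} (h : Consistent X) :
    ∃ Y, X ⊆ Y ∧ MCS Y := by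
  obtain ⟨M, hXM, hM⟩ := zorn_subset_nonempty {Y : Set (Formula α Ag) | Consistent Y}
    (fun c hcS hc hne => ⟨⋃₀ c, fun hbot => by
      obtain ⟨Z, hZ, hZbot⟩ := ProvFrom.exists_mem_of_sUnion hc hne hbot
      exact hcS hZ hZbot, fun _ => Set.subset_sUnion_of_mem⟩) X h
  refine ⟨M, hXM, hM.1, fun φ => ?_⟩
  by_contra! hφ
  have inconsistent_insert (ψ : Formula α Ag) (hψ : ψ ∉ M) : ProvFrom M (.imp ψ .bot) :=
    ProvFrom.deduction <| not_not.mp fun hc =>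
      hψ (hM.2 hc (Set.subset_insert _ _) (Set.mem_insert _ _))
  exact hM.1 (.mp (.mp (.thm (Prov.bot_of_imp_bot_of_neg_imp_bot φ))
    (inconsistent_insert φ hφ.1)) (inconsistent_insert _ hφ.2))

lemma MCS.consistent_neg_union_of_know_not_mem {X : Set (Formula α Ag)} (hX : MCS X)
    {C : Set Ag} {φ : Formula α Ag} (h : Formula.know C φ ∉ X) :
    Consistent ({Formula.neg φ} ∪ {ψ | Formula.know C ψ ∈ X}) := by
  intro hbot
  rw [Set.singleton_union] at hbot
  have hφ : ProvFrom {ψ | Formula.know C ψ ∈ X} φ :=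
    .mp (.thm (Prov.of_neg_imp_bot φ)) (ProvFrom.deduction hbot)
  have hKφ : ProvFrom X (.know C φ) :=
    (hφ.know_image C).mono (Set.image_subset_iff.mpr fun _ hψ => hψ)
  exact h (hX.mem_of_provFrom hKφ)

lemma IsCanState.mcs_hd {X₀ : Set (Formula α Ag)} (hX₀ : MCS X₀) :
    ∀ {w : List (Set Ag × Set (Formula α Ag))}, IsCanState X₀ w → MCS (hd X₀ w)
  | [], _ => hX₀
  | _ :: _, hw => hw.2.1

lemma cSimC_cons (C : Set Ag) (Y : Set (Formula α Ag))
    (w : List (Set Ag × Set (Formula α Ag))) : CSimC C w ((C, Y) :: w) := by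
  intro a ha
  refine ⟨w, List.suffix_rfl, List.suffix_cons _ _, by simp, ?_⟩
  simpa using ha

end CanonicalModel

/-- Canonical existence lemma for knowledge: if `K_C φ ∉ hd w`, then the set
`{¬φ} ∪ {ψ : K_C ψ ∈ hd w}` is consistent and there is a canonical state `u`
with `w ∼_C u` and `φ ∉ hd u`. -/
theorem knowledge_exists {α Ag : Type} {X₀ : Set (Formula α Ag)}
    (hX₀ : MCS X₀) {w : List (Set Ag × Set (Formula α Ag))}
    (hw : IsCanState X₀ w) {C : Set Ag} {φ : Formula α Ag}
    (h : Formula.know C φ ∉ hd X₀ w) :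
    Consistent ({Formula.neg φ} ∪ {ψ | Formula.know C ψ ∈ hd X₀ w}) ∧
    ∃ u, IsCanState X₀ u ∧ CSimC C w u ∧ φ ∉ hd X₀ u := by
  have hcons := (hw.mcs_hd hX₀).consistent_neg_union_of_know_not_mem h
  obtain ⟨Y, hXY, hY⟩ := hcons.exists_mcs_superset
  exact ⟨hcons, (C, Y) :: w, ⟨hw, hY, fun ψ hψ => hXY (Or.inr hψ)⟩, cSimC_cons C Y w,
    hY.not_mem_of_neg_mem (hXY (Or.inl rfl))⟩
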